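/- For real numbers $A,B>0$ and $w>1$, $\frac{\sqrt{w(w-1)}}{\pi}\int_0^1 \frac{1}{\sqrt{v(1-v)}}\,\frac{1}{w-v}\,\log\frac{A+v}{B+v}\,dv = \log\frac{A+w}{B+w} - 2\operatorname{Artanh}\big(\sqrt{\tfrac{w-1}{w}}\sqrt{\tfrac{B}{1+B}}\big) + 2\operatorname{Artanh}\big(\sqrt{\tfrac{w-1}{w}}\sqrt{\tfrac{A}{1+A}}\big)$. -/

import Mathlib

open Real

/-- The inverse hyperbolic tangent, `artanh x = (1/2) log((1+x)/(1-x))`. -/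
noncomputable def artanh (x : ℝ) : ℝ := Real.log ((1 + x) / (1 - x)) / 2

section Aux
open MeasureTheory intervalIntegral Set Filter Topology

lemma meas_base : Measurable (fun v : ℝ => 1 / Real.sqrt (v * (1 - v))) :=
  measurable_const.div
    (Real.continuous_sqrt.comp (continuous_id.mul (continuous_const.sub continuous_id))).measurable

lemma ii_half : IntervalIntegrable (fun v : ℝ => 1 / Real.sqrt (v * (1 - v))) volume 0 (1/2) := by
  have hbase : IntervalIntegrable (fun v : ℝ => Real.sqrt 2 * v ^ (-(1/2) : ℝ)) volume 0 (1/2) :=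
    (intervalIntegrable_rpow' (by norm_num)).const_mul _
  refine hbase.mono_fun meas_base.aestronglyMeasurable ?_
  filter_upwards [ae_restrict_mem measurableSet_uIoc] with v hv
  rw [Set.uIoc_of_le (by norm_num)] at hv
  obtain ⟨h0, h1⟩ := hv
  have hv1 : (1:ℝ)/2 ≤ 1 - v := by linarith
  have hs : Real.sqrt v / Real.sqrt 2 ≤ Real.sqrt (v * (1 - v)) := by
    rw [Real.sqrt_mul h0.le, div_le_iff₀ (by positivity)]
    have h12 : Real.sqrt (1/2) * Real.sqrt 2 = 1 := by
      rw [← Real.sqrt_mul (by norm_num)]; norm_num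
    calc Real.sqrt v = Real.sqrt v * (Real.sqrt (1/2) * Real.sqrt 2) := by rw [h12, mul_one]
      _ ≤ Real.sqrt v * (Real.sqrt (1-v) * Real.sqrt 2) := by
          have := Real.sqrt_le_sqrt hv1
          gcongr
      _ = Real.sqrt v * Real.sqrt (1-v) * Real.sqrt 2 := by ring
  have hsv : 0 < Real.sqrt v := Real.sqrt_pos.2 h0
  have h2 : (0:ℝ) < Real.sqrt 2 := by positivity
  rw [Real.norm_eq_abs, Real.norm_eq_abs, abs_of_nonneg (by positivity),
    abs_of_nonneg (by positivity), Real.rpow_neg h0.le, ← Real.sqrt_eq_rpow]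
  calc 1 / Real.sqrt (v * (1-v)) ≤ 1 / (Real.sqrt v / Real.sqrt 2) := by
        apply one_div_le_one_div_of_le (by positivity) hs
    _ = Real.sqrt 2 * (Real.sqrt v)⁻¹ := by rw [one_div_div]; ring

lemma ii_base : IntervalIntegrable (fun v : ℝ => 1 / Real.sqrt (v * (1 - v))) volume 0 1 := by
  refine ii_half.trans (b := 1/2) ?_
  have h := (ii_half.comp_sub_left 1).symm
  norm_num at h
  have he : (fun x : ℝ => (Real.sqrt ((1-x)*x))⁻¹) = fun v : ℝ => 1 / Real.sqrt (v * (1 - v)) := by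
    funext x; rw [mul_comm, one_div]
  rwa [he] at h

lemma ii_mul {g : ℝ → ℝ} (hg : Measurable g) {M : ℝ}
    (hM : ∀ v ∈ Set.Ioc (0:ℝ) 1, |g v| ≤ M) :
    IntervalIntegrable (fun v => (1 / Real.sqrt (v * (1 - v))) * g v) volume 0 1 := by
  refine (ii_base.const_mul M).mono_fun (meas_base.mul hg).aestronglyMeasurable ?_
  filter_upwards [ae_restrict_mem measurableSet_uIoc] with v hv
  rw [Set.uIoc_of_le (by norm_num)] at hv
  have h1 : (0:ℝ) ≤ 1 / Real.sqrt (v * (1 - v)) := by positivity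
  rw [Real.norm_eq_abs, Real.norm_eq_abs, abs_mul, abs_mul, abs_of_nonneg h1]
  calc 1 / Real.sqrt (v * (1-v)) * |g v| ≤ 1 / Real.sqrt (v * (1-v)) * |M| :=
        mul_le_mul_of_nonneg_left ((hM v hv).trans (le_abs_self M)) h1
    _ = |M| * (1 / Real.sqrt (v * (1-v))) := mul_comm _ _

lemma tendsto_sqrt_atTop : Tendsto Real.sqrt atTop atTop := by
  refine (tendsto_rpow_atTop (by norm_num : (0:ℝ) < 1/2)).congr' ?_
  filter_upwards [eventually_ge_atTop (0:ℝ)] with x hx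
  exact (Real.sqrt_eq_rpow x).symm

lemma key_integral {c : ℝ} (hc : 0 < c) :
    ∫ v in (0:ℝ)..1, (1 / Real.sqrt (v * (1 - v))) * (1 / (c + v))
      = π / Real.sqrt (c * (c + 1)) := by
  set k := Real.sqrt ((c+1)/c) with hkdef
  set K := 2 / Real.sqrt (c*(c+1)) with hKdef
  have hcc : (0:ℝ) < c * (c+1) := by nlinarith
  have hscc : 0 < Real.sqrt (c*(c+1)) := Real.sqrt_pos.2 hcc
  have hk0 : 0 < k := Real.sqrt_pos.2 (by positivity)
  have hK0 : 0 < K := by positivity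
  have hKk : K * k = 2 / c := by
    have e1 : Real.sqrt ((c+1)/c) / Real.sqrt (c*(c+1))
        = Real.sqrt ((c+1)/c / (c*(c+1))) := (Real.sqrt_div (by positivity) _).symm
    have e2 : (c+1)/c / (c*(c+1)) = (1/c)^2 := by field_simp
    have e3 : K * k = 2 * (Real.sqrt ((c+1)/c) / Real.sqrt (c*(c+1))) := by
      rw [hKdef, hkdef]; ring
    rw [e3, e1, e2, Real.sqrt_sq (by positivity)]
    ring
  have hK' : K = 2 / (c * k) := by
    field_simp at hKk ⊢; linarith [hKk]
  set Φ : ℝ → ℝ := fun v => K * Real.arctan (k * Real.sqrt (v / (1 - v))) with hΦ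
  have hint : IntervalIntegrable (fun v => (1 / Real.sqrt (v * (1 - v))) * (1 / (c + v)))
      volume 0 1 := by
    refine ii_mul (measurable_const.div (measurable_const.add measurable_id)) (M := 1/c) ?_
    intro v hv
    have hcv : (0:ℝ) < c + v := by linarith [hv.1]
    rw [abs_of_nonneg (by positivity)]
    apply one_div_le_one_div_of_le hc
    linarith [hv.1]
  have hderiv : ∀ v ∈ Set.Ioo (0:ℝ) 1,
      HasDerivAt Φ ((1 / Real.sqrt (v * (1 - v))) * (1 / (c + v))) v := by
    intro v hv
    obtain ⟨h0, h1⟩ := hv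
    have h1v : (0:ℝ) < 1 - v := by linarith
    set s := Real.sqrt (v / (1-v)) with hsdef
    have hupos : 0 < v / (1-v) := div_pos h0 h1v
    have hs0 : 0 < s := Real.sqrt_pos.2 hupos
    have hu : HasDerivAt (fun v : ℝ => v / (1-v)) (1/(1-v)^2) v := by
      have h := (hasDerivAt_id v).div ((hasDerivAt_const v (1:ℝ)).sub (hasDerivAt_id v))
        (by linarith : (1:ℝ) - v ≠ 0)
      refine h.congr_deriv ?_
      simp only [Pi.sub_apply, id_eq]
      ring
    have hsq : HasDerivAt (fun v : ℝ => Real.sqrt (v / (1-v)))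
        (1/(2*s) * (1/(1-v)^2)) v := (Real.hasDerivAt_sqrt hupos.ne').comp v hu
    have harc : HasDerivAt Φ
        (K * ((1/(1+(k*s)^2)) * (k * (1/(2*s) * (1/(1-v)^2))))) v :=
      by have h := (((Real.hasDerivAt_arctan (k*s)).comp v (hsq.const_mul k)).const_mul K); exact h
    convert harc using 1
    have h3 : 1 + (k*s)^2 = (c+v)/(c*(1-v)) := by
      have hs2 : s^2 = v/(1-v) := Real.sq_sqrt hupos.le
      have hk2 : k^2 = (c+1)/c := Real.sq_sqrt (by positivity)
      rw [mul_pow, hs2, hk2]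
      field_simp
      ring
    have h1' : s * (1-v) = Real.sqrt (v * (1-v)) := by
      rw [hsdef, show v * (1-v) = v/(1-v) * (1-v)^2 by field_simp,
        Real.sqrt_mul hupos.le, Real.sqrt_sq h1v.le]
    rw [← h1', h3, hK']
    have hcv : (0:ℝ) < c + v := by linarith
    field_simp
  have ha : Tendsto Φ (𝓝[>] (0:ℝ)) (𝓝 0) := by
    have h0 : ContinuousAt (fun v : ℝ => v / (1 - v)) 0 :=
      ContinuousAt.div continuousAt_id (continuousAt_const.sub continuousAt_id) (by norm_num)
    have h1 : ContinuousAt Φ 0 :=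
      continuousAt_const.mul (Real.continuous_arctan.continuousAt.comp
        (continuousAt_const.mul (Real.continuous_sqrt.continuousAt.comp h0)))
    have h2 : Tendsto Φ (𝓝[>] (0:ℝ)) (𝓝 (Φ 0)) :=
      h1.tendsto.mono_left nhdsWithin_le_nhds
    simpa [hΦ] using h2
  have hb : Tendsto Φ (𝓝[<] (1:ℝ)) (𝓝 (K * (π/2))) := by
    have h1 : Tendsto (fun v : ℝ => 1 - v) (𝓝[<] (1:ℝ)) (𝓝[>] (0:ℝ)) := by
      apply tendsto_nhdsWithin_of_tendsto_nhds_of_eventually_within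
      · have h : Tendsto (fun v : ℝ => 1 - v) (𝓝[<] (1:ℝ)) (𝓝 (1 - 1)) :=
          ((continuous_const.sub continuous_id).tendsto (1:ℝ)).mono_left nhdsWithin_le_nhds
        simpa using h
      · filter_upwards [self_mem_nhdsWithin] with v hv
        exact sub_pos.2 (Set.mem_Iio.1 hv)
    have h2 : Tendsto (fun v : ℝ => v / (1 - v)) (𝓝[<] (1:ℝ)) atTop := by
      have hinv := h1.inv_tendsto_nhdsGT_zero
      have hid : Tendsto (fun v : ℝ => v) (𝓝[<] (1:ℝ)) (𝓝 1) :=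
        tendsto_id.mono_left nhdsWithin_le_nhds
      have := hid.pos_mul_atTop one_pos hinv
      refine this.congr fun v => ?_
      rw [div_eq_mul_inv]; rfl
    have h3 : Tendsto (fun v : ℝ => k * Real.sqrt (v / (1-v))) (𝓝[<] (1:ℝ)) atTop :=
      (tendsto_const_mul_atTop_of_pos hk0).2 (_root_.tendsto_sqrt_atTop.comp h2)
    exact ((Real.tendsto_arctan_atTop.mono_right nhdsWithin_le_nhds).comp h3).const_mul K
  rw [integral_eq_sub_of_hasDerivAt_of_tendsto (by norm_num) hderiv hint ha hb]
  rw [hKdef]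
  field_simp
  ring

lemma key_integral_w {w : ℝ} (hw : 1 < w) :
    ∫ v in (0:ℝ)..1, (1 / Real.sqrt (v * (1 - v))) * (1 / (w - v))
      = π / Real.sqrt (w * (w - 1)) := by
  have h := intervalIntegral.integral_comp_sub_left
    (a := 0) (b := 1) (fun v => (1 / Real.sqrt (v * (1 - v))) * (1 / ((w-1) + v))) 1
  norm_num at h
  have e1 : (∫ v in (0:ℝ)..1, (1 / Real.sqrt (v * (1 - v))) * (1 / (w - v)))
      = ∫ x in (0:ℝ)..1, (Real.sqrt ((1-x) * x))⁻¹ * (w - x)⁻¹ := by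
    refine intervalIntegral.integral_congr fun x _ => ?_
    rw [mul_comm (1-x) x]; simp [one_div]
  have e2 : (∫ x in (0:ℝ)..1, (Real.sqrt (x * (1-x)))⁻¹ * (w - 1 + x)⁻¹)
      = ∫ v in (0:ℝ)..1, (1 / Real.sqrt (v * (1 - v))) * (1 / ((w-1) + v)) := by
    refine intervalIntegral.integral_congr fun x _ => ?_
    simp [one_div]
  rw [e1, h, e2, key_integral (by linarith : (0:ℝ) < w - 1),
    show w - 1 + 1 = w by ring, mul_comm]

lemma log_abs_bound {a : ℝ} (ha : 0 < a) {v : ℝ} (h0 : 0 < v) (h1 : v ≤ 1) :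
    |Real.log (a + v)| ≤ |Real.log a| + |Real.log (a + 1)| := by
  have hl : Real.log a ≤ Real.log (a + v) := Real.log_le_log ha (by linarith)
  have hu : Real.log (a + v) ≤ Real.log (a + 1) := Real.log_le_log (by linarith) (by linarith)
  rw [abs_le]
  constructor
  · have := neg_abs_le (Real.log a)
    have h2 : (0:ℝ) ≤ |Real.log (a+1)| := abs_nonneg _
    linarith
  · have := le_abs_self (Real.log (a+1))
    have h2 : (0:ℝ) ≤ |Real.log a| := abs_nonneg _
    linarith

lemma ii_log {w a : ℝ} (hw : 1 < w) (ha : 0 < a) :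
    IntervalIntegrable
      (fun v => 1 / Real.sqrt (v * (1 - v)) * (1 / (w - v)) * Real.log (a + v)) volume 0 1 := by
  have hw1 : (0:ℝ) < w - 1 := by linarith
  have h := ii_mul (g := fun v => (1/(w-v)) * Real.log (a + v))
    ((measurable_const.div (measurable_const.sub measurable_id)).mul
      (Real.measurable_log.comp (measurable_const.add measurable_id)))
    (M := (1/(w-1)) * (|Real.log a| + |Real.log (a+1)|)) ?_
  · simpa only [← mul_assoc] using h
  intro v hv
  rw [abs_mul]
  apply mul_le_mul _ (log_abs_bound ha hv.1 hv.2) (abs_nonneg _) (one_div_nonneg.2 hw1.le)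
  rw [abs_of_nonneg (one_div_nonneg.2 (by linarith [hv.2] : (0:ℝ) ≤ w - v))]
  apply one_div_le_one_div_of_le hw1
  linarith [hv.2]

lemma hasDerivAt_F {w : ℝ} (hw : 1 < w) {a : ℝ} (ha : 0 < a) :
    HasDerivAt (fun x => ∫ v in (0:ℝ)..1,
        (1 / Real.sqrt (v * (1 - v))) * (1 / (w - v)) * Real.log (x + v))
      (∫ v in (0:ℝ)..1,
        (1 / Real.sqrt (v * (1 - v))) * (1 / (w - v)) * (1 / (a + v))) a := by
  have hw1 : (0:ℝ) < w - 1 := by linarith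
  have hmeas1 : Measurable (fun v : ℝ => 1 / Real.sqrt (v * (1 - v)) * (1 / (w - v))) :=
    meas_base.mul (measurable_const.div (measurable_const.sub measurable_id))
  have key := intervalIntegral.hasDerivAt_integral_of_dominated_loc_of_deriv_le
    (μ := volume) (a := (0:ℝ)) (b := 1) (x₀ := a)
    (F := fun x v => (1 / Real.sqrt (v * (1 - v))) * (1 / (w - v)) * Real.log (x + v))
    (F' := fun x v => (1 / Real.sqrt (v * (1 - v))) * (1 / (w - v)) * (1 / (x + v)))
    (bound := fun v => (1 / Real.sqrt (v * (1 - v))) * ((1/(w-1)) * (2/a)))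
    (Metric.ball_mem_nhds a (half_pos ha))
    (Filter.Eventually.of_forall fun x =>
      (hmeas1.mul (Real.measurable_log.comp (measurable_const.add measurable_id))).aestronglyMeasurable)
    ?hint
    ((hmeas1.mul (measurable_const.div (measurable_const.add measurable_id))).aestronglyMeasurable)
    ?hbound
    ?hbint
    ?hdiff
  · exact key.2
  case hint => exact ii_log hw ha
  case hbound =>
    apply Filter.Eventually.of_forall
    intro v hv x hx
    rw [Set.uIoc_of_le (by norm_num : (0:ℝ) ≤ 1)] at hv
    rw [Metric.mem_ball, Real.dist_eq, abs_lt] at hx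
    have hxv : a/2 < x + v := by linarith [hv.1]
    have hwv : (0:ℝ) < w - v := by linarith [hv.2]
    rw [Real.norm_eq_abs, abs_of_nonneg (mul_nonneg (mul_nonneg (by positivity)
      (one_div_nonneg.2 hwv.le)) (one_div_nonneg.2 (by linarith : (0:ℝ) ≤ x + v)))]
    have h1 : 1/(w-v) ≤ 1/(w-1) := by
      apply one_div_le_one_div_of_le hw1; linarith [hv.2]
    have h2 : 1/(x+v) ≤ 2/a := by
      rw [div_le_div_iff₀ (by linarith) ha]
      linarith
    have h0 : (0:ℝ) ≤ 1 / Real.sqrt (v * (1-v)) := by positivity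
    calc 1 / Real.sqrt (v * (1-v)) * (1/(w-v)) * (1/(x+v))
        ≤ 1 / Real.sqrt (v * (1-v)) * (1/(w-1)) * (2/a) := by
          apply mul_le_mul (mul_le_mul le_rfl h1 (one_div_nonneg.2 hwv.le) h0) h2
            (one_div_nonneg.2 (by linarith : (0:ℝ) ≤ x + v))
          exact mul_nonneg h0 (one_div_nonneg.2 hw1.le)
      _ = 1 / Real.sqrt (v * (1-v)) * ((1/(w-1)) * (2/a)) := by ring
  case hbint =>
    exact ii_mul measurable_const (M := |(1/(w-1)) * (2/a)|) (fun v _ => le_rfl)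
  case hdiff =>
    apply Filter.Eventually.of_forall
    intro v hv x hx
    rw [Set.uIoc_of_le (by norm_num : (0:ℝ) ≤ 1)] at hv
    rw [Metric.mem_ball, Real.dist_eq, abs_lt] at hx
    have hxv : (0:ℝ) < x + v := by linarith [hv.1]
    exact (((hasDerivAt_id x).add_const v).log hxv.ne').const_mul
      (1 / Real.sqrt (v * (1 - v)) * (1 / (w - v)))

lemma ii_w {w : ℝ} (hw : 1 < w) :
    IntervalIntegrable (fun v => (1 / Real.sqrt (v * (1 - v))) * (1 / (w - v))) volume 0 1 := by
  have hw1 : (0:ℝ) < w - 1 := by linarith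
  refine ii_mul (measurable_const.div (measurable_const.sub measurable_id)) (M := 1/(w-1)) ?_
  intro v hv
  rw [abs_of_nonneg (one_div_nonneg.2 (by linarith [hv.2] : (0:ℝ) ≤ w - v))]
  exact one_div_le_one_div_of_le hw1 (by linarith [hv.2])

lemma ii_a {a : ℝ} (ha : 0 < a) :
    IntervalIntegrable (fun v => (1 / Real.sqrt (v * (1 - v))) * (1 / (a + v))) volume 0 1 := by
  refine ii_mul (measurable_const.div (measurable_const.add measurable_id)) (M := 1/a) ?_
  intro v hv
  rw [abs_of_nonneg (one_div_nonneg.2 (by linarith [hv.1] : (0:ℝ) ≤ a + v))]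
  exact one_div_le_one_div_of_le ha (by linarith [hv.1])

lemma Fprime_value {w a : ℝ} (hw : 1 < w) (ha : 0 < a) :
    (∫ v in (0:ℝ)..1, (1 / Real.sqrt (v * (1 - v))) * (1 / (w - v)) * (1 / (a + v)))
      = (1/(w+a)) * (π / Real.sqrt (w*(w-1)) + π / Real.sqrt (a*(a+1))) := by
  have hcongr : (∫ v in (0:ℝ)..1, (1 / Real.sqrt (v * (1 - v))) * (1 / (w - v)) * (1 / (a + v)))
      = ∫ v in (0:ℝ)..1, (1/(w+a)) * ((1 / Real.sqrt (v * (1 - v))) * (1 / (w - v))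
          + (1 / Real.sqrt (v * (1 - v))) * (1 / (a + v))) := by
    refine intervalIntegral.integral_congr fun v hv => ?_
    rw [Set.uIcc_of_le (by norm_num : (0:ℝ) ≤ 1)] at hv
    have h1 : w - v ≠ 0 := by have := hv.2; intro h; linarith [hv.2]
    have h2 : a + v ≠ 0 := by intro h; linarith [hv.1]
    have h3 : w + a ≠ 0 := by intro h; linarith
    have aux : (1/(w-v))*(1/(a+v)) = (1/(w+a))*(1/(w-v) + 1/(a+v)) := by
      field_simp
      ring
    calc (1 / Real.sqrt (v * (1 - v))) * (1 / (w - v)) * (1 / (a + v))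
        = (1 / Real.sqrt (v * (1 - v))) * ((1/(w-v))*(1/(a+v))) := by ring
      _ = (1 / Real.sqrt (v * (1 - v))) * ((1/(w+a))*(1/(w-v) + 1/(a+v))) := by rw [aux]
      _ = (1/(w+a)) * ((1 / Real.sqrt (v * (1 - v))) * (1 / (w - v))
          + (1 / Real.sqrt (v * (1 - v))) * (1 / (a + v))) := by ring
  rw [hcongr, intervalIntegral.integral_const_mul,
    intervalIntegral.integral_add (ii_w hw) (ii_a ha), key_integral_w hw, key_integral ha]



lemma hasDerivAt_artanh {x : ℝ} (hx : |x| < 1) :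
    HasDerivAt _root_.artanh (1/(1-x^2)) x := by
  rw [abs_lt] at hx
  have h1 : (0:ℝ) < 1 + x := by linarith [hx.1]
  have h2 : (0:ℝ) < 1 - x := by linarith [hx.2]
  have ha : HasDerivAt (fun y : ℝ => Real.log (1 + y)) (1/(1+x)) x := by
    have h := (((hasDerivAt_id x).const_add (1:ℝ)).log h1.ne')
    simpa using h
  have hb : HasDerivAt (fun y : ℝ => Real.log (1 - y)) (-1/(1-x)) x := by
    have h := (((hasDerivAt_id x).const_sub (1:ℝ)).log h2.ne')
    simpa using h
  have hψ : HasDerivAt (fun y : ℝ => (Real.log (1 + y) - Real.log (1 - y)) / 2)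
      ((1/(1+x) - -1/(1-x))/2) x := (ha.sub hb).div_const 2
  have heq : _root_.artanh =ᶠ[𝓝 x] fun y => (Real.log (1+y) - Real.log (1-y))/2 := by
    filter_upwards [Ioo_mem_nhds hx.1 hx.2] with y hy
    rw [_root_.artanh, Real.log_div (by linarith [hy.1] : (1:ℝ)+y ≠ 0)
      (by rw [sub_ne_zero]; exact fun h => absurd hy.2 (by simp [← h]) : (1:ℝ)-y ≠ 0)]
  have h := hψ.congr_of_eventuallyEq heq
  refine h.congr_deriv ?_
  have h3 : 1 - x^2 ≠ 0 := by nlinarith [hx.1, hx.2]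
  field_simp [h1.ne', h2.ne']
  ring

lemma sqrt_w_eq {w : ℝ} (hw : 1 < w) :
    Real.sqrt (w * (w - 1)) = Real.sqrt ((w-1)/w) * w := by
  rw [show w * (w-1) = (w-1)/w * w^2 by field_simp, Real.sqrt_mul
    (div_nonneg (by linarith) (by linarith) : (0:ℝ) ≤ (w-1)/w) , Real.sqrt_sq (by linarith : (0:ℝ) ≤ w)]

lemma sqrt_a_eq {a : ℝ} (ha : 0 < a) :
    Real.sqrt (a * (1 + a)) = Real.sqrt (a/(1+a)) * (1+a) := by
  rw [show a * (1+a) = a/(1+a) * (1+a)^2 by field_simp, Real.sqrt_mul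
    (div_nonneg ha.le (by linarith) : (0:ℝ) ≤ a/(1+a)), Real.sqrt_sq (by linarith : (0:ℝ) ≤ 1+a)]

lemma hasDerivAt_rhs {w a : ℝ} (hw : 1 < w) (ha : 0 < a) :
    HasDerivAt (fun a => Real.log (a + w)
        + 2 * _root_.artanh (Real.sqrt ((w-1)/w) * Real.sqrt (a/(1+a))))
      (1/(w+a) + Real.sqrt (w*(w-1)) / ((w+a) * Real.sqrt (a*(1+a)))) a := by
  have hw0 : (0:ℝ) < w := by linarith
  have h1a : (0:ℝ) < 1 + a := by linarith
  set c := Real.sqrt ((w-1)/w) with hcdef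
  set s := Real.sqrt (a/(1+a)) with hsdef
  have hc2 : c^2 = (w-1)/w := Real.sq_sqrt (div_nonneg (by linarith) hw0.le)
  have hs2 : s^2 = a/(1+a) := Real.sq_sqrt (div_nonneg ha.le h1a.le)
  have hs0 : 0 < s := Real.sqrt_pos.2 (div_pos ha h1a)
  have hc0 : 0 ≤ c := Real.sqrt_nonneg _
  have hx2 : (c*s)^2 = (w-1)*a/(w*(1+a)) := by
    rw [mul_pow, hc2, hs2]; field_simp
  have hxlt : |c * s| < 1 := by
    have h2 : (c*s)^2 < 1 := by rw [hx2]; rw [div_lt_one (mul_pos hw0 h1a)]; nlinarith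
    have h0 : 0 ≤ c * s := by positivity
    rw [abs_of_nonneg h0]
    nlinarith
  have hlog : HasDerivAt (fun a : ℝ => Real.log (a + w)) (1/(a+w)) a := by
    have h := (((hasDerivAt_id a).add_const w).log (by linarith : a + w ≠ 0))
    simpa using h
  have hq : HasDerivAt (fun a : ℝ => a/(1+a)) (1/(1+a)^2) a := by
    have h := (hasDerivAt_id a).div ((hasDerivAt_const a (1:ℝ)).add (hasDerivAt_id a))
      (by linarith : (1:ℝ) + a ≠ 0)
    refine h.congr_deriv ?_
    simp only [Pi.add_apply, id_eq]
    ring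
  have hm : HasDerivAt (fun a : ℝ => Real.sqrt (a/(1+a)))
      (1/(2*s) * (1/(1+a)^2)) a :=
    (Real.hasDerivAt_sqrt (div_pos ha h1a).ne').comp a hq
  have hart : HasDerivAt (fun a : ℝ => _root_.artanh (c * Real.sqrt (a/(1+a))))
      ((1/(1-(c*s)^2)) * (c * (1/(2*s) * (1/(1+a)^2)))) a :=
    by have h := (hasDerivAt_artanh hxlt).comp a (hm.const_mul c); exact h
  have htot := hlog.add (hart.const_mul 2)
  refine htot.congr_deriv ?_
  rw [sqrt_w_eq hw, sqrt_a_eq ha, ← hcdef, ← hsdef]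
  have hsub : 1 - (c*s)^2 = (w+a)/(w*(1+a)) := by
    rw [hx2]; field_simp; ring
  rw [hsub]
  have hwa : w + a ≠ 0 := by positivity
  field_simp
  ring

noncomputable def Gaux (w : ℝ) : ℝ → ℝ := fun a =>
  Real.sqrt (w * (w - 1)) / π
      * (∫ v in (0:ℝ)..1, 1 / Real.sqrt (v * (1 - v)) * (1 / (w - v)) * Real.log (a + v))
    - (Real.log (a + w) + 2 * _root_.artanh (Real.sqrt ((w-1)/w) * Real.sqrt (a/(1+a))))

lemma hasDerivAt_Gaux {w a : ℝ} (hw : 1 < w) (ha : 0 < a) :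
    HasDerivAt (Gaux w) 0 a := by
  have hπ : (0:ℝ) < π := Real.pi_pos
  have hsw : 0 < Real.sqrt (w * (w-1)) := Real.sqrt_pos.2 (by nlinarith)
  have hsa : 0 < Real.sqrt (a * (1+a)) := Real.sqrt_pos.2 (by nlinarith)
  have h1 := (hasDerivAt_F hw ha).const_mul (Real.sqrt (w * (w - 1)) / π)
  have h2 := hasDerivAt_rhs hw ha
  have h3 := h1.sub h2
  have h4 : HasDerivAt (Gaux w)
      (Real.sqrt (w * (w - 1)) / π
          * (∫ v in (0:ℝ)..1, 1 / Real.sqrt (v * (1 - v)) * (1 / (w - v)) * (1 / (a + v)))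
        - (1/(w+a) + Real.sqrt (w*(w-1)) / ((w+a) * Real.sqrt (a*(1+a))))) a := h3
  convert h4 using 1
  rw [Fprime_value hw ha, show a * (a+1) = a * (1+a) by ring]
  have hwa : w + a ≠ 0 := by intro h; nlinarith
  set S := Real.sqrt (w * (w - 1))
  set T := Real.sqrt (a * (1 + a))
  field_simp
  ring

lemma Gaux_const {w : ℝ} (hw : 1 < w) {x y : ℝ} (hx : 0 < x) (hy : 0 < y) :
    Gaux w x = Gaux w y := by
  have key : ∀ p q : ℝ, 0 < p → p < q → Gaux w p = Gaux w q := by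
    intro p q hp hpq
    have hcont : ContinuousOn (Gaux w) (Set.Icc p q) := fun z hz =>
      ((hasDerivAt_Gaux hw (lt_of_lt_of_le hp hz.1)).continuousAt).continuousWithinAt
    obtain ⟨z, hz, h0⟩ := exists_hasDerivAt_eq_slope (Gaux w) (fun _ => 0) hpq hcont
      (fun z hz => hasDerivAt_Gaux hw (hp.trans hz.1))
    have h : (Gaux w q - Gaux w p) / (q - p) = 0 := h0.symm
    rcases div_eq_zero_iff.1 h with h | h
    · linarith
    · exfalso; exact (sub_ne_zero.2 hpq.ne') h
  rcases lt_trichotomy x y with h | h | h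
  · exact key x y hx h
  · rw [h]
  · exact (key y x hy h).symm

end Aux

/-- For `A, B > 0` and `w > 1`,
`(√(w(w-1))/π) ∫₀¹ (1/√(v(1-v))) (1/(w-v)) log((A+v)/(B+v)) dv
  = log((A+w)/(B+w)) - 2 artanh(√((w-1)/w)·√(B/(1+B))) + 2 artanh(√((w-1)/w)·√(A/(1+A)))`. -/
theorem integral_log_ratio_resolvent (A B w : ℝ) (hA : 0 < A) (hB : 0 < B) (hw : 1 < w) :
    Real.sqrt (w * (w - 1)) / π
        * ∫ v in (0:ℝ)..1,
            (1 / Real.sqrt (v * (1 - v))) * (1 / (w - v)) * Real.log ((A + v) / (B + v))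
      = Real.log ((A + w) / (B + w))
        - 2 * _root_.artanh (Real.sqrt ((w - 1) / w) * Real.sqrt (B / (1 + B)))
        + 2 * _root_.artanh (Real.sqrt ((w - 1) / w) * Real.sqrt (A / (1 + A))) := by
  have hGAB := Gaux_const hw hA hB
  unfold Gaux at hGAB
  have hiA := ii_log hw hA
  have hiB := ii_log hw hB
  have hsplit : (∫ v in (0:ℝ)..1,
        (1 / Real.sqrt (v * (1 - v))) * (1 / (w - v)) * Real.log ((A + v) / (B + v)))
      = (∫ v in (0:ℝ)..1, 1 / Real.sqrt (v * (1 - v)) * (1 / (w - v)) * Real.log (A + v))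
        - ∫ v in (0:ℝ)..1, 1 / Real.sqrt (v * (1 - v)) * (1 / (w - v)) * Real.log (B + v) := by
    rw [← intervalIntegral.integral_sub hiA hiB]
    refine intervalIntegral.integral_congr fun v hv => ?_
    rw [Set.uIcc_of_le (by norm_num : (0:ℝ) ≤ 1)] at hv
    rw [Real.log_div (by intro h; linarith [hv.1] : A + v ≠ 0)
      (by intro h; linarith [hv.1] : B + v ≠ 0)]
    ring
  have hlogw : Real.log ((A + w) / (B + w)) = Real.log (A + w) - Real.log (B + w) :=
    Real.log_div (by intro h; linarith) (by intro h; linarith)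
  rw [hsplit, hlogw, mul_sub]
  linarith [hGAB]
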